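/- arXiv:math-ph/0407033 — 4 statements merged into one kernel-verified Lean document; each statement's English description precedes it below -/
import Mathlib

section
/- The averaging operator acts on the basis by A_q φ_n(x; a) = φ_{n−1}(x; a q^{1/2}) · [1 − a q^{-1/2}(1 + q^n) x + a^2 q^{n−1}] for n ≥ 1. -/
/-!
Split `φ_n(x; a)` into the two q-Pochhammer symbols `(a e^{iθ}; q)_n (a e^{-iθ}; q)_n`.
Replacing `e^{iθ}` by `q^{±1/2} e^{iθ}`, one factor of each loses its last term and the other
its first, after which it shifts to `(a q^{1/2} e^{±iθ}; q)_{n-1}`. Both terms of the average thus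
contain `φ_{n-1}(x; a q^{1/2})`, and the two leftover quadratic factors add up to the bracket.
-/

open Complex Finset

namespace AskeyWilson

variable {K : Type*} [Field K]

def qPochhammer (b q : K) (n : ℕ) : K := ∏ k ∈ range n, (1 - b * q ^ k)

theorem qPochhammer_succ (b q : K) (n : ℕ) :
    qPochhammer b q (n + 1) = qPochhammer b q n * (1 - b * q ^ n) :=
  prod_range_succ _ _

theorem qPochhammer_succ_eq_mul_qPochhammer_mul (b q : K) (n : ℕ) :
    qPochhammer b q (n + 1) = (1 - b) * qPochhammer (b * q) q n := by
  rw [qPochhammer, prod_range_succ', mul_comm, pow_zero, mul_one]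
  exact congrArg _ (prod_congr rfl fun k _ => by ring)

def basis (a q : K) (n : ℕ) (w : K) : K :=
  ∏ k ∈ range n, ((1 - a * q ^ k * w) * (1 - a * q ^ k * w⁻¹))

theorem basis_eq_qPochhammer_mul (a q : K) (n : ℕ) (w : K) :
    basis a q n w = qPochhammer (a * w) q n * qPochhammer (a * w⁻¹) q n := by
  rw [basis, qPochhammer, qPochhammer, ← prod_mul_distrib]
  exact prod_congr rfl fun k _ => by ring

/-- The average `A_q` without its factor `1/2`, so that the identity holds in every field. -/
theorem basis_succ_add_basis_succ (a s w : K) (hs : s ≠ 0) (hw : w ≠ 0) (m : ℕ) :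
    basis a (s ^ 2) (m + 1) (s * w) + basis a (s ^ 2) (m + 1) (s⁻¹ * w) =
      basis (a * s) (s ^ 2) m w *
        (2 - a * s⁻¹ * (1 + (s ^ 2) ^ (m + 1)) * (w + w⁻¹) + 2 * a ^ 2 * (s ^ 2) ^ m) := by
  have shift (v : K) : a * (s⁻¹ * v) * s ^ 2 = a * (s * v) := by field_simp
  simp only [basis_eq_qPochhammer_mul, mul_inv, inv_inv, mul_assoc a s]
  rw [qPochhammer_succ, qPochhammer_succ_eq_mul_qPochhammer_mul (a * (s⁻¹ * w⁻¹)),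
    qPochhammer_succ_eq_mul_qPochhammer_mul (a * (s⁻¹ * w)), qPochhammer_succ (a * (s * w⁻¹)),
    shift, shift]
  generalize qPochhammer (a * (s * w)) (s ^ 2) m = A
  generalize qPochhammer (a * (s * w⁻¹)) (s ^ 2) m = B
  field_simp
  ring

end AskeyWilson

open AskeyWilson

/-- `A_q φ_n(x;a) = φ_{n-1}(x; a q^{1/2}) [1 - a q^{-1/2}(1+qⁿ)x + a² q^{n-1}]`,
with `s = q^{1/2} > 0`, `x = cos θ`, `z = e^{iθ}`, `n ≥ 1`. -/
theorem askey_wilson_A_on_basis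
    (s θ : ℝ) (hs : 0 < s) (a : ℂ) (n : ℕ) (hn : 1 ≤ n) :
    let q : ℂ := (s : ℂ) ^ 2
    let z : ℂ := Complex.exp (θ * Complex.I)
    let P : ℂ → ℂ := fun w => ∏ k ∈ Finset.range n,
      ((1 - a * q ^ k * w) * (1 - a * q ^ k * w⁻¹))
    (P ((s : ℂ) * z) + P ((s : ℂ)⁻¹ * z)) / 2 =
      (∏ k ∈ Finset.range (n - 1),
          ((1 - a * (s : ℂ) * q ^ k * z) * (1 - a * (s : ℂ) * q ^ k * z⁻¹))) *
        (1 - a * (s : ℂ)⁻¹ * (1 + q ^ n) * Complex.cos (θ : ℂ) +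
          a ^ 2 * q ^ (n - 1)) := by
  intro q z P
  obtain ⟨m, rfl⟩ := Nat.exists_eq_add_of_le' hn
  have hcos : Complex.cos (θ : ℂ) = (z + z⁻¹) / 2 := by
    rw [← exp_neg, ← neg_mul, ← two_cos]; ring
  have hsum := basis_succ_add_basis_succ a (s : ℂ) z (by exact_mod_cast hs.ne') (exp_ne_zero _) m
  change (basis a q (m + 1) (s * z) + basis a q (m + 1) ((s : ℂ)⁻¹ * z)) / 2 =
    basis (a * s) q (m + 1 - 1) z * _
  rw [hsum, hcos, Nat.add_sub_cancel]
  ring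
end

section
/- Let a_1, …, a_{2N} ∈ ℂ with elementary symmetric functions σ_0 = 1, σ_1, …, σ_{2N}, and let x = cos θ. Then (1/2)[e^{-iNθ} ∏_{j=1}^{2N}(1 − a_j e^{iθ}) + e^{iNθ} ∏_{j=1}^{2N}(1 − a_j e^{-iθ})] = (-1)^N σ_N + Σ_{l=0}^{N−1} (−1)^l (σ_l + σ_{2N−l}) T_{N−l}(x), where T_m is the Chebyshev polynomial of the first kind. -/
open Complex Finset Polynomial

lemma prod_one_sub_mul_expand (n : ℕ) (a : Fin n → ℂ) (z : ℂ) :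
    ∏ j, (1 - a j * z) =
      ∑ l ∈ Finset.range (n + 1),
        (-1) ^ l * (∑ t ∈ Finset.powersetCard l (Finset.univ : Finset (Fin n)), ∏ i ∈ t, a i) * z ^ l := by
  have h1 : ∀ j : Fin n, 1 - a j * z = -(a j * z) + 1 := fun j => by ring
  simp_rw [h1]
  rw [Finset.prod_add]
  simp only [Finset.prod_const_one, mul_one]
  have hmap : ∀ t ∈ (Finset.univ : Finset (Fin n)).powerset, t.card ∈ Finset.range (n + 1) := by
    intro t ht
    rw [Finset.mem_range, Nat.lt_succ_iff]
    exact le_trans (Finset.card_le_card (Finset.mem_powerset.mp ht)) (by simp)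
  rw [← Finset.sum_fiberwise_of_maps_to hmap (fun t => ∏ i ∈ t, -(a i * z))]
  refine Finset.sum_congr rfl fun l _ => ?_
  rw [Finset.mul_sum, Finset.sum_mul]
  rw [show Finset.filter (fun t => t.card = l) (Finset.univ : Finset (Fin n)).powerset
      = Finset.powersetCard l Finset.univ from (Finset.powersetCard_eq_filter ..).symm]
  refine Finset.sum_congr rfl fun t ht => ?_
  have hc : t.card = l := (Finset.mem_powersetCard.mp ht).2
  calc ∏ i ∈ t, -(a i * z) = ∏ i ∈ t, (-1) * a i * z := by
        refine Finset.prod_congr rfl fun i _ => by ring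
    _ = ((-1)^t.card * ∏ i ∈ t, a i) * z ^ t.card := by
        rw [Finset.prod_mul_distrib, Finset.prod_mul_distrib]
        simp
    _ = (-1) ^ l * (∏ i ∈ t, a i) * z ^ l := by rw [hc, mul_assoc]

/-- Chebyshev-T expansion of the symmetrized product:
`(1/2)[e^{-iNθ}∏(1-a_j e^{iθ}) + e^{iNθ}∏(1-a_j e^{-iθ})]
  = (-1)^N σ_N + Σ_{l<N} (-1)^l (σ_l + σ_{2N-l}) T_{N-l}(cos θ)`. -/
theorem symmetrized_product_chebyshevT_expansion (N : ℕ) (a : Fin (2 * N) → ℂ) (θ : ℂ) :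
    let σ : ℕ → ℂ := fun l =>
      ∑ t ∈ Finset.powersetCard l (Finset.univ : Finset (Fin (2 * N))), ∏ i ∈ t, a i
    (1 / 2 : ℂ) *
        (Complex.exp (-(N : ℂ) * θ * Complex.I) *
            ∏ j, (1 - a j * Complex.exp (θ * Complex.I)) +
          Complex.exp ((N : ℂ) * θ * Complex.I) *
            ∏ j, (1 - a j * Complex.exp (-θ * Complex.I))) =
      (-1) ^ N * σ N +
        ∑ l ∈ Finset.range N, (-1) ^ l * (σ l + σ (2 * N - l)) *
          (Polynomial.Chebyshev.T ℂ ((N : ℤ) - l)).eval (Complex.cos θ) := by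
  intro σ
  rw [prod_one_sub_mul_expand, prod_one_sub_mul_expand]
  set f : ℕ → ℂ := fun l => (-1) ^ l * σ l * Complex.cos ((((N : ℤ) - l : ℤ) : ℂ) * θ) with hf
  have key : (1 / 2 : ℂ) *
        (Complex.exp (-(N : ℂ) * θ * Complex.I) *
            ∑ l ∈ Finset.range (2 * N + 1), (-1) ^ l * σ l * Complex.exp (θ * Complex.I) ^ l +
          Complex.exp ((N : ℂ) * θ * Complex.I) *
            ∑ l ∈ Finset.range (2 * N + 1), (-1) ^ l * σ l * Complex.exp (-θ * Complex.I) ^ l) =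
      ∑ l ∈ Finset.range (2 * N + 1), f l := by
    rw [Finset.mul_sum, Finset.mul_sum, ← Finset.sum_add_distrib, Finset.mul_sum]
    refine Finset.sum_congr rfl fun l _ => ?_
    rw [← Complex.exp_nat_mul, ← Complex.exp_nat_mul, hf]
    simp only [Complex.cos]
    have e1 : Complex.exp (-(N : ℂ) * θ * Complex.I + (l : ℂ) * (θ * Complex.I)) =
        Complex.exp (-((((N : ℤ) - l : ℤ) : ℂ) * θ) * Complex.I) := by
      congr 1; push_cast; ring
    have e2 : Complex.exp ((N : ℂ) * θ * Complex.I + (l : ℂ) * (-θ * Complex.I)) =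
        Complex.exp ((((N : ℤ) - l : ℤ) : ℂ) * θ * Complex.I) := by
      congr 1; push_cast; ring
    calc (1 / 2 : ℂ) * (Complex.exp (-(N : ℂ) * θ * Complex.I) *
            ((-1) ^ l * σ l * Complex.exp ((l : ℂ) * (θ * Complex.I))) +
          Complex.exp ((N : ℂ) * θ * Complex.I) *
            ((-1) ^ l * σ l * Complex.exp ((l : ℂ) * (-θ * Complex.I))))
        = (-1) ^ l * σ l *
          ((Complex.exp (-(N : ℂ) * θ * Complex.I + (l : ℂ) * (θ * Complex.I)) +
            Complex.exp ((N : ℂ) * θ * Complex.I + (l : ℂ) * (-θ * Complex.I))) / 2) := by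
          rw [Complex.exp_add, Complex.exp_add]; ring
      _ = _ := by rw [e1, e2]; ring
  rw [key]
  have hsplit : ∑ l ∈ Finset.range (2 * N + 1), f l =
      f N + (∑ l ∈ Finset.range N, f l + ∑ l ∈ Finset.range N, f (2 * N - l)) := by
    have h2N : 2 * N + 1 = N + 1 + N := by ring
    have hr : ∑ i ∈ Finset.range N, f (N + 1 + i) = ∑ l ∈ Finset.range N, f (2 * N - l) := by
      rw [← Finset.sum_range_reflect (fun i : ℕ => f (N + 1 + i)) N]
      refine Finset.sum_congr rfl fun i hi => ?_
      have h : N + 1 + (N - 1 - i) = 2 * N - i := by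
        have := Finset.mem_range.mp hi; omega
      simp only [h]
    rw [h2N, Finset.sum_range_add, Finset.sum_range_succ, hr]
    abel
  rw [hsplit]
  have hfN : f N = (-1) ^ N * σ N := by simp [hf]
  rw [hfN]
  congr 1
  rw [← Finset.sum_add_distrib]
  refine Finset.sum_congr rfl fun l hl => ?_
  have hl' := Finset.mem_range.mp hl
  rw [Polynomial.Chebyshev.T_complex_cos]
  simp only [hf]
  have hx : (-1 : ℂ) ^ (2 * N - l) * (-1) ^ l = 1 := by
    rw [← pow_add, show 2 * N - l + l = 2 * N by omega, pow_mul]; norm_num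
  have hy : (-1 : ℂ) ^ l * (-1) ^ l = 1 := by
    rw [← pow_add, ← two_mul, pow_mul]; norm_num
  have hsign : (-1 : ℂ) ^ (2 * N - l) = (-1) ^ l := by
    calc (-1 : ℂ) ^ (2 * N - l) = (-1) ^ (2 * N - l) * ((-1) ^ l * (-1) ^ l) := by rw [hy, mul_one]
      _ = ((-1) ^ (2 * N - l) * (-1) ^ l) * (-1) ^ l := by ring
      _ = (-1) ^ l := by rw [hx, one_mul]
  have h1 : ((N : ℤ) - (2 * N - l : ℕ) : ℤ) = -((N : ℤ) - l) := by omega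
  have hcos : Complex.cos ((((N : ℤ) - (2 * N - l : ℕ) : ℤ) : ℂ) * θ) =
      Complex.cos ((((N : ℤ) - l : ℤ) : ℂ) * θ) := by
    rw [h1]; push_cast; rw [neg_mul, Complex.cos_neg]
  rw [hsign, hcos]
  ring
end

section
/- Let a_1, …, a_{2N} ∈ ℂ with elementary symmetric functions σ_j (σ_0 = 1), and let x = cos θ with sin θ ≠ 0. Then (i/sin θ)[e^{-iNθ} ∏_{j=1}^{2N}(1 − a_j e^{iθ}) − e^{iNθ} ∏_{j=1}^{2N}(1 − a_j e^{-iθ})] = 2 Σ_{l=0}^{N−1} (−1)^l (σ_l − σ_{2N−l}) U_{N−l−1}(x), where U_m is the Chebyshev polynomial of the second kind. -/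
open Complex Finset Polynomial

/-- Chebyshev-U expansion of the antisymmetrized product:
`(i/sin θ)[e^{-iNθ}∏(1-a_j e^{iθ}) − e^{iNθ}∏(1-a_j e^{-iθ})]
  = 2 Σ_{l<N} (-1)^l (σ_l − σ_{2N-l}) U_{N-l-1}(cos θ)`, for `sin θ ≠ 0`. -/
theorem antisymmetrized_product_chebyshevU_expansion (N : ℕ) (a : Fin (2 * N) → ℂ)
    (θ : ℂ) (hθ : Complex.sin θ ≠ 0) :
    let σ : ℕ → ℂ := fun l =>
      ∑ t ∈ Finset.powersetCard l (Finset.univ : Finset (Fin (2 * N))), ∏ i ∈ t, a i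
    (Complex.I / Complex.sin θ) *
        (Complex.exp (-(N : ℂ) * θ * Complex.I) *
            ∏ j, (1 - a j * Complex.exp (θ * Complex.I)) -
          Complex.exp ((N : ℂ) * θ * Complex.I) *
            ∏ j, (1 - a j * Complex.exp (-θ * Complex.I))) =
      2 * ∑ l ∈ Finset.range N, (-1) ^ l * (σ l - σ (2 * N - l)) *
          (Polynomial.Chebyshev.U ℂ ((N : ℤ) - l - 1)).eval (Complex.cos θ) := by
  intro σ
  have hσ : ∀ l, σ l = ∑ t ∈ Finset.powersetCard l (Finset.univ : Finset (Fin (2 * N))),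
      ∏ i ∈ t, a i := fun l => rfl
  -- exp(wI) - exp(-wI) = 2 i sin w
  have hdiff : ∀ w : ℂ, Complex.exp (w * Complex.I) - Complex.exp (-w * Complex.I)
      = 2 * Complex.I * Complex.sin w := by
    intro w
    rw [Complex.exp_mul_I, Complex.exp_mul_I, Complex.cos_neg, Complex.sin_neg]
    ring
  -- expansion of the product in elementary symmetric functions
  have hprod : ∀ w : ℂ, (∏ j, (1 - a j * w))
      = ∑ k ∈ Finset.range (2 * N + 1), (-w) ^ k * σ k := by
    intro w
    have h1 : ∀ j : Fin (2 * N), (1 : ℂ) - a j * w = a j * -w + 1 := fun j => by ring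
    rw [Finset.prod_congr rfl (fun j _ => h1 j), Finset.prod_add]
    simp only [Finset.prod_const_one, mul_one, Finset.prod_mul_distrib, Finset.prod_const]
    rw [Finset.sum_powerset]
    simp only [Finset.card_univ, Fintype.card_fin, hσ]
    refine Finset.sum_congr rfl fun k _ => ?_
    have h2 : ∀ t ∈ Finset.powersetCard k (Finset.univ : Finset (Fin (2 * N))),
        (∏ i ∈ t, a i) * (-w) ^ t.card = (∏ i ∈ t, a i) * (-w) ^ k := fun t ht => by
      rw [(Finset.mem_powersetCard.1 ht).2]
    rw [Finset.sum_congr rfl h2, ← Finset.sum_mul, mul_comm]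
  -- the antisymmetrized combination in terms of sines
  have hL : Complex.exp (-(N : ℂ) * θ * Complex.I) *
        (∏ j, (1 - a j * Complex.exp (θ * Complex.I))) -
      Complex.exp ((N : ℂ) * θ * Complex.I) *
        (∏ j, (1 - a j * Complex.exp (-θ * Complex.I)))
      = ∑ k ∈ Finset.range (2 * N + 1),
          (-1 : ℂ) ^ k * σ k * (-(2 * Complex.I) * Complex.sin (((N : ℂ) - k) * θ)) := by
    rw [hprod, hprod, Finset.mul_sum, Finset.mul_sum, ← Finset.sum_sub_distrib]
    refine Finset.sum_congr rfl fun k _ => ?_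
    have e1 : Complex.exp (-(N : ℂ) * θ * Complex.I) * Complex.exp ((k : ℂ) * (θ * Complex.I))
        = Complex.exp (-(((N : ℂ) - k) * θ) * Complex.I) := by
      rw [← Complex.exp_add]; congr 1; ring
    have e2 : Complex.exp ((N : ℂ) * θ * Complex.I) * Complex.exp ((k : ℂ) * (-θ * Complex.I))
        = Complex.exp ((((N : ℂ) - k) * θ) * Complex.I) := by
      rw [← Complex.exp_add]; congr 1; ring
    have hw := hdiff (((N : ℂ) - k) * θ)
    rw [neg_pow (Complex.exp (θ * Complex.I)), neg_pow (Complex.exp (-θ * Complex.I)),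
      ← Complex.exp_nat_mul, ← Complex.exp_nat_mul]
    linear_combination ((-1 : ℂ) ^ k * σ k) * e1 - ((-1 : ℂ) ^ k * σ k) * e2
      - ((-1 : ℂ) ^ k * σ k) * hw
  -- combinatorial reindexing of the sum of sines
  have key : ∑ k ∈ Finset.range (2 * N + 1), (-1 : ℂ) ^ k * σ k * Complex.sin (((N : ℂ) - k) * θ)
      = ∑ l ∈ Finset.range N,
          (-1 : ℂ) ^ l * (σ l - σ (2 * N - l)) * Complex.sin (((N : ℂ) - l) * θ) := by
    have h21 : 2 * N + 1 = N + (N + 1) := by omega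
    rw [h21, Finset.sum_range_add, Finset.sum_range_succ']
    have hrefl := Finset.sum_range_reflect
      (fun j => (-1 : ℂ) ^ (N + (j + 1)) * σ (N + (j + 1))
        * Complex.sin (((N : ℂ) - (N + (j + 1) : ℕ)) * θ)) N
    rw [← hrefl]
    have hz : (-1 : ℂ) ^ (N + 0) * σ (N + 0) * Complex.sin (((N : ℂ) - (N + 0 : ℕ)) * θ) = 0 := by
      simp
    rw [hz, add_zero, ← Finset.sum_add_distrib]
    refine Finset.sum_congr rfl fun l hl => ?_
    have hl' : l < N := Finset.mem_range.1 hl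
    have harg : N + (N - 1 - l + 1) = 2 * N - l := by omega
    rw [harg]
    have hc : ((2 * N - l : ℕ) : ℂ) = 2 * (N : ℂ) - l := by
      push_cast [Nat.cast_sub (by omega : l ≤ 2 * N)]; ring
    have hsgn : ((-1 : ℂ)) ^ (2 * N - l) = (-1 : ℂ) ^ l := by
      have h' : 2 * N - l = 2 * (N - l) + l := by omega
      rw [h', pow_add, pow_mul]; norm_num
    rw [hc, hsgn, show ((N : ℂ) - (2 * (N : ℂ) - l)) * θ = -(((N : ℂ) - l) * θ) from by ring,
      Complex.sin_neg]
    ring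
  -- Chebyshev U values as ratios of sines
  have hU : ∀ l ∈ Finset.range N,
      (Polynomial.Chebyshev.U ℂ ((N : ℤ) - l - 1)).eval (Complex.cos θ)
        = Complex.sin (((N : ℂ) - l) * θ) / Complex.sin θ := by
    intro l _
    have h := Polynomial.Chebyshev.U_complex_cos θ ((N : ℤ) - l - 1)
    rw [eq_div_iff hθ, h]
    push_cast
    ring_nf
  rw [hL]
  calc (Complex.I / Complex.sin θ) * ∑ k ∈ Finset.range (2 * N + 1),
        (-1 : ℂ) ^ k * σ k * (-(2 * Complex.I) * Complex.sin (((N : ℂ) - k) * θ))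
      = (2 / Complex.sin θ) * ∑ k ∈ Finset.range (2 * N + 1),
          (-1 : ℂ) ^ k * σ k * Complex.sin (((N : ℂ) - k) * θ) := by
        rw [Finset.mul_sum, Finset.mul_sum]
        refine Finset.sum_congr rfl fun k _ => ?_
        rw [div_mul_eq_mul_div, div_mul_eq_mul_div]
        congr 1
        linear_combination (-2 * ((-1 : ℂ) ^ k * σ k * Complex.sin (((N : ℂ) - k) * θ)))
          * Complex.I_sq
    _ = (2 / Complex.sin θ) * ∑ l ∈ Finset.range N,
          (-1 : ℂ) ^ l * (σ l - σ (2 * N - l)) * Complex.sin (((N : ℂ) - l) * θ) := by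
        rw [key]
    _ = 2 * ∑ l ∈ Finset.range N, (-1) ^ l * (σ l - σ (2 * N - l)) *
          (Polynomial.Chebyshev.U ℂ ((N : ℤ) - l - 1)).eval (Complex.cos θ) := by
        rw [Finset.mul_sum, Finset.mul_sum]
        refine Finset.sum_congr rfl fun l hl => ?_
        rw [hU l hl]
        ring
end

section
/- Define Π(y) = ((−1)^{N/2}/(2y)) [ (y + i/2) ∏_{j=1}^{2N}(y − i s_j) + (y − i/2) ∏_{j=1}^{2N}(y + i s_j) ]. Then Π is a polynomial in x = y^2 of degree N with Π = (−1)^{N/2} [ x^N + Σ_{j=0}^{N−1} (−1)^j ((1/2) ς_{2j+1} − ς_{2j+2}) x^{N−j−1} ], where ς_k is the k-th elementary symmetric function of s_1, …, s_{2N} (ς_0 = 1). -/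
/-!
Expanding both products by elementary symmetric functions, `∏ (y ± i s_j) = ∑ₖ (±i)ᵏ ςₖ y^{2N-k}`,
the bracket becomes `∑ₖ wₖ ςₖ y^{2N-k}` with `wₖ = (y + i/2)(-i)ᵏ + (y - i/2)iᵏ`. The weight is
`2y(-1)ᵐ` for `k = 2m` and `(-1)ᵐ` for `k = 2m + 1`, so every term carries an even power of `y`
after a factor `2y` is pulled out; that factor cancels the prefactor `1/(2y)`.
-/

open Complex Finset

theorem Finset.prod_add_mul_eq_sum_powersetCard {ι R : Type*} [CommSemiring R] (s : Finset ι)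
    (f : ι → R) (c y : R) :
    ∏ i ∈ s, (y + c * f i) =
      ∑ k ∈ range (#s + 1), c ^ k * (∑ t ∈ s.powersetCard k, ∏ i ∈ t, f i) * y ^ (#s - k) := by
  classical
  simp_rw [add_comm y, prod_add, prod_const, sum_powerset, mul_sum, sum_mul]
  refine sum_congr rfl fun k _ => sum_congr rfl fun t ht => ?_
  obtain ⟨hts, rfl⟩ := mem_powersetCard.1 ht
  rw [prod_mul_distrib, prod_const, card_sdiff_of_subset hts]

theorem Finset.sum_range_two_mul_add_one {M : Type*} [AddCommMonoid M] (n : ℕ) (f : ℕ → M) :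
    ∑ k ∈ range (2 * n + 1), f k =
      ∑ m ∈ range (n + 1), f (2 * m) + ∑ m ∈ range n, f (2 * m + 1) := by
  induction n with
  | zero => simp
  | succ n ih =>
    rw [show 2 * (n + 1) + 1 = 2 * n + 1 + 1 + 1 by omega, sum_range_succ, sum_range_succ, ih]
    simp only [sum_range_succ, mul_add_one]
    abel

noncomputable def halfIWeight (y : ℂ) (k : ℕ) : ℂ := (y + I / 2) * (-I) ^ k + (y - I / 2) * I ^ k

theorem halfIWeight_two_mul (y : ℂ) (m : ℕ) : halfIWeight y (2 * m) = 2 * y * (-1) ^ m := by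
  rw [halfIWeight, pow_mul, pow_mul, neg_sq, I_sq]
  ring

theorem halfIWeight_two_mul_add_one (y : ℂ) (m : ℕ) : halfIWeight y (2 * m + 1) = (-1) ^ m := by
  rw [halfIWeight, pow_succ, pow_succ, pow_mul, pow_mul, neg_sq, I_sq]
  linear_combination (-(-1 : ℂ) ^ m) * I_sq

theorem sum_halfIWeight_mul_eq (N : ℕ) (a : ℕ → ℂ) (ha : a 0 = 1) (y : ℂ) :
    ∑ k ∈ range (2 * N + 1), halfIWeight y k * a k * y ^ (2 * N - k) =
      2 * y * ((y ^ 2) ^ N + ∑ j ∈ range N,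
        (-1) ^ j * ((1 / 2 : ℂ) * a (2 * j + 1) - a (2 * j + 2)) * (y ^ 2) ^ (N - j - 1)) := by
  rw [sum_range_two_mul_add_one, sum_range_succ', add_right_comm, ← sum_add_distrib, mul_add,
    mul_sum, add_comm]
  congr 1
  · rw [halfIWeight_two_mul, ha, Nat.sub_zero, ← pow_mul]
    ring
  · refine sum_congr rfl fun j hj => ?_
    rw [mem_range] at hj
    rw [halfIWeight_two_mul, halfIWeight_two_mul_add_one, mul_add_one,
      show 2 * N - (2 * j + 2) = 2 * (N - j - 1) by omega,
      show 2 * N - (2 * j + 1) = 2 * (N - j - 1) + 1 by omega, pow_succ, pow_mul]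
    ring

theorem Pi_polynomial_in_x_general (N : ℕ) (s : Fin (2 * N) → ℂ) (y : ℂ) (hy : y ≠ 0) :
    let ς : ℕ → ℂ := fun l =>
      ∑ t ∈ Finset.powersetCard l (Finset.univ : Finset (Fin (2 * N))), ∏ i ∈ t, s i
    ((-1 : ℂ) ^ (N / 2) / (2 * y)) *
        ((y + Complex.I / 2) * ∏ j, (y - Complex.I * s j) +
          (y - Complex.I / 2) * ∏ j, (y + Complex.I * s j)) =
      (-1 : ℂ) ^ (N / 2) *
        ((y ^ 2) ^ N +
          ∑ j ∈ Finset.range N, (-1) ^ j *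
            ((1 / 2 : ℂ) * ς (2 * j + 1) - ς (2 * j + 2)) * (y ^ 2) ^ (N - j - 1)) := by
  intro ς
  have expand (c : ℂ) :
      ∏ j, (y + c * s j) = ∑ k ∈ range (2 * N + 1), c ^ k * ς k * y ^ (2 * N - k) := by
    simpa using prod_add_mul_eq_sum_powersetCard univ s c y
  have bracket : (y + I / 2) * ∏ j, (y - I * s j) + (y - I / 2) * ∏ j, (y + I * s j) =
      ∑ k ∈ range (2 * N + 1), halfIWeight y k * ς k * y ^ (2 * N - k) := by
    simp_rw [sub_eq_add_neg y, ← neg_mul, expand, mul_sum, ← sum_add_distrib]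
    exact sum_congr rfl fun k _ => by rw [halfIWeight]; ring
  rw [bracket, sum_halfIWeight_mul_eq N ς (by simp [ς]) y]
  field_simp

/-- `Π(y) = ((-1)^{N/2}/(2y))[(y+i/2)∏(y-is_j) + (y-i/2)∏(y+is_j)]` is a polynomial
in `x = y²`: `Π = (-1)^{N/2}[xᴺ + Σ_{j<N} (-1)^j ((1/2)ς_{2j+1} - ς_{2j+2}) x^{N-j-1}]`. -/
theorem Pi_polynomial_in_x (N : ℕ) (hN : 0 < N) (hNe : Even N)
    (s : Fin (2 * N) → ℂ) (y : ℂ) (hy : y ≠ 0) :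
    let ς : ℕ → ℂ := fun l =>
      ∑ t ∈ Finset.powersetCard l (Finset.univ : Finset (Fin (2 * N))), ∏ i ∈ t, s i
    ((-1 : ℂ) ^ (N / 2) / (2 * y)) *
        ((y + Complex.I / 2) * ∏ j, (y - Complex.I * s j) +
          (y - Complex.I / 2) * ∏ j, (y + Complex.I * s j)) =
      (-1 : ℂ) ^ (N / 2) *
        ((y ^ 2) ^ N +
          ∑ j ∈ Finset.range N, (-1) ^ j *
            ((1 / 2 : ℂ) * ς (2 * j + 1) - ς (2 * j + 2)) * (y ^ 2) ^ (N - j - 1)) :=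
  Pi_polynomial_in_x_general N s y hy
end
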